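/- For every integer k ≥ 2, the number of distinct cores of words w ∈ {right, down}^{k−1} is exactly 2^{k−2}; that is, the image of the core map on the set of all 2^{k−1} step words of G-stairs has cardinality 2^{k−2}. (Since two G-stairs have the same generators exactly when their step words have the same core, and there are k choices of labeling, this is the combinatorial content of the Theorem that there are k·2^{k−2} simple chambers.) -/
import Mathlib

/-- A step of a stair: a right step `+(1,0)` or a down step `+(0,-1)`. -/
inductive Step
  | right
  | down
deriving DecidableEq, BEq

/-- The core of a step word: delete the left tail (maximal initial run of down steps) and the
right tail (maximal final run of right steps). -/
def core (w : List Step) : List Step :=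
  ((w.dropWhile (· == Step.down)).reverse.dropWhile (· == Step.right)).reverse

instance : LawfulBEq Step where
  eq_of_beq {a b} h := by cases a <;> cases b <;> first | rfl | exact absurd h (by decide)
  rfl {a} := by cases a <;> rfl

instance : Fintype Step := ⟨{Step.right, Step.down}, by intro x; cases x <;> simp⟩

/-- Strip the maximal final run of right steps. -/
def stripR (w : List Step) : List Step :=
  (w.reverse.dropWhile (· == Step.right)).reverse

lemma core_eq (w : List Step) : core w = stripR (w.dropWhile (· == Step.down)) := rfl

lemma dropWhile_replicate_append (j : ℕ) (l : List Step) :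
    List.dropWhile (· == Step.right) (List.replicate j Step.right ++ l) =
      List.dropWhile (· == Step.right) l := by
  induction j with
  | zero => simp
  | succ j ih => simp [List.replicate_succ, List.dropWhile_cons, ih]

lemma stripR_append_replicate (l : List Step) (j : ℕ) :
    stripR (l ++ List.replicate j Step.right) = stripR l := by
  simp [stripR, List.reverse_append, List.reverse_replicate, dropWhile_replicate_append]

lemma stripR_spec (w : List Step) :
    ∃ j, w = stripR w ++ List.replicate j Step.right := by
  refine ⟨(w.reverse.takeWhile (· == Step.right)).length, ?_⟩
  have h1 : w.reverse.takeWhile (· == Step.right) =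
      List.replicate (w.reverse.takeWhile (· == Step.right)).length Step.right := by
    rw [List.eq_replicate_length]
    intro b hb
    have := List.mem_takeWhile_imp hb
    exact eq_of_beq this
  conv_lhs => rw [← w.reverse_reverse,
    ← List.takeWhile_append_dropWhile (p := (· == Step.right)) (l := w.reverse)]
  rw [List.reverse_append, h1, List.reverse_replicate, List.length_replicate]
  rfl

lemma stripR_inj {u v : List Step} (h : u.length = v.length) (he : stripR u = stripR v) :
    u = v := by
  obtain ⟨j, hj⟩ := stripR_spec u
  obtain ⟨i, hi⟩ := stripR_spec v
  have hji : j = i := by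
    have h1 := congrArg List.length hj
    have h2 := congrArg List.length hi
    simp only [List.length_append, List.length_replicate] at h1 h2
    rw [he] at h1
    omega
  rw [hj, hi, he, hji]

lemma head_dropWhile (p : Step → Bool) (l : List Step) {x t} (h : l.dropWhile p = x :: t) :
    p x = false := by
  induction l with
  | nil => simp at h
  | cons a l ih =>
    rw [List.dropWhile_cons] at h
    by_cases hp : p a
    · rw [if_pos hp] at h; exact ih h
    · rw [if_neg hp] at h
      cases h
      simpa using hp

/-- For `k ≥ 2`, the image of the core map on the set of all `2^{k-1}` step
words `w ∈ {right, down}^{k-1}` of `G`-stairs has cardinality exactly `2^{k-2}`.  (Since two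
`G`-stairs have the same generators exactly when their step words have the same core, and
there are `k` labelings, this is the combinatorial content of the theorem that there are
`k·2^{k-2}` simple chambers.) -/
theorem stmt9 (k : ℕ) (hk : 2 ≤ k) :
    (core '' {w : List Step | w.length = k - 1}).ncard = 2 ^ (k - 2) := by
  obtain ⟨n, rfl⟩ : ∃ n, k = n + 2 := ⟨k - 2, by omega⟩
  have hk1 : n + 2 - 1 = n + 1 := rfl
  have hk2 : n + 2 - 2 = n := rfl
  rw [hk1, hk2]
  have hset : core '' {w : List Step | w.length = n + 1} =
      (fun u => stripR (Step.right :: u)) '' {u : List Step | u.length = n} := by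
    ext c
    constructor
    · rintro ⟨w, hw, rfl⟩
      simp only [Set.mem_setOf_eq] at hw
      have hlen : (w.dropWhile (· == Step.down)).length ≤ n + 1 := by
        have := (List.dropWhile_sublist (l := w) (· == Step.down)).length_le
        omega
      rcases hcw : w.dropWhile (· == Step.down) with _ | ⟨x, t⟩
      · refine ⟨List.replicate n Step.right, by simp, ?_⟩
        have h1 : (Step.right :: List.replicate n Step.right)
            = ([] : List Step) ++ List.replicate (n + 1) Step.right := by
          simp [List.replicate_succ]
        simp only [Set.mem_image]
        rw [core_eq, hcw, h1, stripR_append_replicate]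
      · have hx : x = Step.right := by
          have := head_dropWhile _ w hcw
          cases x
          · rfl
          · exact absurd this (by decide)
        subst hx
        have htl : t.length ≤ n := by
          rw [hcw] at hlen
          simp only [List.length_cons] at hlen
          omega
        refine ⟨t ++ List.replicate (n - t.length) Step.right, ?_, ?_⟩
        · simp only [Set.mem_setOf_eq, List.length_append, List.length_replicate]
          omega
        · show stripR (Step.right :: (t ++ _)) = core w
          rw [core_eq, hcw]
          have := stripR_append_replicate (Step.right :: t) (n - t.length)
          simpa using this
    · rintro ⟨u, hu, rfl⟩
      simp only [Set.mem_setOf_eq] at hu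
      refine ⟨Step.right :: u, by simp [hu], ?_⟩
      rw [core_eq]
      have : (Step.right :: u).dropWhile (· == Step.down) = Step.right :: u := by
        rw [List.dropWhile_cons, if_neg (by decide)]
      rw [this]
  rw [hset]
  rw [Set.ncard_image_of_injOn]
  · have hcard : {u : List Step | u.length = n}.ncard = Nat.card (List.Vector Step n) := rfl
    rw [hcard, Nat.card_eq_fintype_card, card_vector]
    rfl
  · intro u hu v hv h
    simp only [Set.mem_setOf_eq] at hu hv
    have : Step.right :: u = Step.right :: v :=
      stripR_inj (by simp [hu, hv]) h
    simpa using this
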